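/- Let K be a commutative ring and A a nonunital commutative associative K-algebra. Let U be the quotient of the tensor algebra Tens_K(A ⊕ A) by the two-sided ideal generated by the elements l_a − r_a, r_a·r_b − r_{ab}, l_a·r_b − r_b·l_a, and l_{ab} − l_b·l_a for all a, b ∈ A, where l_a (resp. r_a) denotes the image in the tensor algebra of (a,0) (resp. (0,a)). Then there is an isomorphism of unital K-algebras U ≅ A₊ carrying the class of r_a to a, where A₊ is the unitization of A. -/

import Mathlib

noncomputable section

/-- `l_a ∈ Tens_K(A ⊕ A)`. -/
def lT (K A : Type) [CommRing K] [NonUnitalCommRing A] [Module K A] (a : A) :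
    TensorAlgebra K (A × A) :=
  TensorAlgebra.ι K (a, 0)

/-- `r_a ∈ Tens_K(A ⊕ A)`. -/
def rT (K A : Type) [CommRing K] [NonUnitalCommRing A] [Module K A] (a : A) :
    TensorAlgebra K (A × A) :=
  TensorAlgebra.ι K (0, a)

/-- The relations defining the universal enveloping algebra of a commutative associative
algebra: quotienting by this relation is the same as quotienting by the two-sided ideal
generated by `l_a − r_a`, `r_a·r_b − r_{ab}`, `l_a·r_b − r_b·l_a`, `l_{ab} − l_b·l_a`. -/
inductive ComRel (K A : Type) [CommRing K] [NonUnitalCommRing A] [Module K A] :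
    TensorAlgebra K (A × A) → TensorAlgebra K (A × A) → Prop
  | lreq (a : A) : ComRel K A (lT K A a) (rT K A a)
  | rr (a b : A) : ComRel K A (rT K A a * rT K A b) (rT K A (a * b))
  | lr (a b : A) : ComRel K A (lT K A a * rT K A b) (rT K A b * lT K A a)
  | ll (a b : A) : ComRel K A (lT K A (a * b)) (lT K A b * lT K A a)

/-!
Since `A` is commutative, sending both `l_a` and `r_a` to `a ∈ A₊` respects all four relations,
so `(a, b) ↦ a + b` induces `U → A₊`. Conversely, the relation `r_a r_b = r_{ab}` makes
`a ↦ [r_a]` a nonunital algebra map `A → U`, which extends to `A₊ → U`. The two composites fix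
the generators, because `[l_a] = [r_a]` in `U`.
-/

namespace ComRel

variable (K A : Type) [CommRing K] [NonUnitalCommRing A] [Module K A]

lemma ι_eq_lT_add_rT (a b : A) : TensorAlgebra.ι K (a, b) = lT K A a + rT K A b := by
  rw [lT, rT, ← map_add, Prod.mk_add_mk, add_zero, zero_add]

lemma mkAlgHom_lT (a : A) :
    RingQuot.mkAlgHom K (ComRel K A) (lT K A a) = RingQuot.mkAlgHom K (ComRel K A) (rT K A a) :=
  RingQuot.mkAlgHom_rel K (lreq a)

def mkR : A →ₙₐ[K] RingQuot (ComRel K A) where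
  toFun a := RingQuot.mkAlgHom K (ComRel K A) (rT K A a)
  map_smul' c a := by simp only [rT, Prod.smul_mk, smul_zero, ← map_smul]; rfl
  map_zero' := by simp only [rT, Prod.mk_zero_zero, map_zero]
  map_add' a b := by simp only [rT, ← map_add, Prod.mk_add_mk, add_zero]
  map_mul' a b := by rw [← map_mul]; exact (RingQuot.mkAlgHom_rel K (rr a b)).symm

lemma mkR_apply (a : A) : mkR K A a = RingQuot.mkAlgHom K (ComRel K A) (rT K A a) := rfl

def inrAddInr : A × A →ₗ[K] Unitization K A :=
  (Unitization.inrHom K K A).coprod (Unitization.inrHom K K A)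

@[simp]
lemma inrAddInr_apply (a b : A) : inrAddInr K A (a, b) = (a + b : A) := by
  simp [inrAddInr, Unitization.inr_add]

variable [IsScalarTower K A A] [SMulCommClass K A A]

lemma lift_inrAddInr_rel ⦃x y : TensorAlgebra K (A × A)⦄ (h : ComRel K A x y) :
    TensorAlgebra.lift K (inrAddInr K A) x = TensorAlgebra.lift K (inrAddInr K A) y := by
  rcases h with a | ⟨a, b⟩ | ⟨a, b⟩ | ⟨a, b⟩ <;>
    simp [lT, rT, inrAddInr, Unitization.inr_mul, mul_comm]

def toUnitization : RingQuot (ComRel K A) →ₐ[K] Unitization K A :=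
  RingQuot.liftAlgHom K ⟨TensorAlgebra.lift K (inrAddInr K A), lift_inrAddInr_rel K A⟩

@[simp]
lemma toUnitization_mkAlgHom_rT (a : A) :
    toUnitization K A (RingQuot.mkAlgHom K (ComRel K A) (rT K A a)) = a := by
  simp [toUnitization, rT]

def ofUnitization : Unitization K A →ₐ[K] RingQuot (ComRel K A) :=
  Unitization.lift (mkR K A)

@[simp]
lemma ofUnitization_inr (a : A) :
    ofUnitization K A a = RingQuot.mkAlgHom K (ComRel K A) (rT K A a) := by
  simp [ofUnitization, mkR_apply]

def equivUnitization : RingQuot (ComRel K A) ≃ₐ[K] Unitization K A :=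
  AlgEquiv.ofAlgHom (toUnitization K A) (ofUnitization K A)
    (Unitization.algHom_ext' <| NonUnitalAlgHom.ext fun a =>
      show toUnitization K A (ofUnitization K A a) = a by simp)
    (RingQuot.ringQuot_ext' _ _ _ <| TensorAlgebra.hom_ext <| LinearMap.ext fun ⟨a, b⟩ => by
      simp [ι_eq_lT_add_rT, mkAlgHom_lT])

end ComRel

/-- The universal enveloping algebra of a nonunital commutative associative `K`-algebra
`A` is its unitization `A₊`, via `r_a ↦ a`. -/
theorem uCom_iso (K A : Type) [CommRing K] [NonUnitalCommRing A] [Module K A]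
    [IsScalarTower K A A] [SMulCommClass K A A] :
    ∃ e : RingQuot (ComRel K A) ≃ₐ[K] Unitization K A,
      ∀ a : A, e (RingQuot.mkAlgHom K (ComRel K A) (rT K A a)) = (a : Unitization K A) :=
  ⟨ComRel.equivUnitization K A, ComRel.toUnitization_mkAlgHom_rT K A⟩

end
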